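/- arXiv:2007.07398 — 5 statements merged into one kernel-verified Lean document; each statement's English description precedes it below -/
import Mathlib

section
/- Let d be an even positive integer, ω = exp(2πi/(2d)), and let F be the 2d×2d Fourier matrix F_{j,k} = ω^{jk}/√(2d). Define ℓ ∈ {0,1}^d by ℓ_j = 0 for j < d/2 and ℓ_j = 1 for j ≥ d/2, and let M be the d×d matrix with M_{j,k} = F_{2j+ℓ_j, 2k+ℓ_k}. Then rank(M) = d. -/
/-!
The selected indices are `m + d * (m % 2)` for `m < d`: the even `m` stay, the odd `m` are
shifted by `d`. Since `d` is even, `(m + d * (m % 2)) * (n + d * (n % 2)) ≡ m * n [MOD 2 * d]`,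
so up to the scalar `1 / √(2d)` the submatrix is the Vandermonde matrix with nodes `ω ^ m`,
`m < d`, with rows and columns permuted by `m ↦ (2j + ℓ_j) % d`. The nodes are distinct because
`ω` is a primitive `2d`-th root of unity.
-/

open Complex Matrix

theorem Nat.add_mul_mod_two_mul_modEq {d : ℕ} (hd : Even d) (m n : ℕ) :
    (m + d * (m % 2)) * (n + d * (n % 2)) ≡ m * n [MOD 2 * d] := by
  obtain ⟨e, rfl⟩ := hd
  obtain ⟨p, hm⟩ : ∃ p, m = 2 * p + m % 2 := ⟨m / 2, (Nat.div_add_mod m 2).symm⟩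
  obtain ⟨q, hn⟩ : ∃ q, n = 2 * q + n % 2 := ⟨n / 2, (Nat.div_add_mod n 2).symm⟩
  generalize m % 2 = a at hm ⊢
  generalize n % 2 = b at hn ⊢
  subst hm hn
  have expand : (2 * p + a + (e + e) * a) * (2 * q + b + (e + e) * b) =
      (2 * p + a) * (2 * q + b) + 2 * (e + e) * (a * q + b * p + a * b + e * a * b) := by ring
  rw [expand]
  exact Nat.add_mul_mod_self_left _ _ _

theorem IsPrimitiveRoot.rank_vandermonde_pow {R : Type*} [CommRing R] [IsDomain R] {ζ : R}
    {n d : ℕ} (hζ : IsPrimitiveRoot ζ n) (hdn : d ≤ n) :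
    (vandermonde fun m : Fin d ↦ ζ ^ (m : ℕ)).rank = d := by
  rw [rank_of_det_ne_zero, Fintype.card_fin]
  exact det_vandermonde_ne_zero_iff.mpr fun a b hab ↦
    Fin.ext (hζ.pow_inj (a.2.trans_le hdn) (b.2.trans_le hdn) hab)

def evenOddIndex (d j : ℕ) : ℕ := 2 * j + if j < d / 2 then 0 else 1

theorem evenOddIndex_injective (d : ℕ) : Function.Injective (evenOddIndex d) := by
  intro j k h
  simp only [evenOddIndex] at h
  split_ifs at h <;> omega

theorem evenOddIndex_mod_add_mul_mod_two {d j : ℕ} (hd : Even d) (hj : j < d) :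
    evenOddIndex d j % d + d * (evenOddIndex d j % d % 2) = evenOddIndex d j := by
  obtain ⟨e, rfl⟩ := hd
  unfold evenOddIndex
  split_ifs with hje
  · rw [Nat.mod_eq_of_lt (by omega), show (2 * j + 0) % 2 = 0 by omega]
    omega
  · rw [Nat.mod_eq_sub_mod (by omega), Nat.mod_eq_of_lt (by omega),
      show (2 * j + 1 - (e + e)) % 2 = 1 by omega]
    omega

noncomputable def evenOddPerm {d : ℕ} (hd : Even d) : Fin d ≃ Fin d :=
  Equiv.ofBijective (fun j ↦ ⟨evenOddIndex d j % d, Nat.mod_lt _ j.pos⟩) <|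
    Finite.injective_iff_bijective.mp fun j k h ↦ Fin.ext <| evenOddIndex_injective d <| by
      rw [← evenOddIndex_mod_add_mul_mod_two hd j.2, ← evenOddIndex_mod_add_mul_mod_two hd k.2,
        Fin.mk.inj_iff.mp h]

theorem evenOddIndex_eq_evenOddPerm {d : ℕ} (hd : Even d) (j : Fin d) :
    evenOddIndex d j = evenOddPerm hd j + d * ((evenOddPerm hd j : ℕ) % 2) :=
  (evenOddIndex_mod_add_mul_mod_two hd j.2).symm

theorem pow_evenOddIndex_mul {G : Type*} [Monoid G] {ω : G} {d : ℕ} (hω : ω ^ (2 * d) = 1)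
    (hd : Even d) (j k : Fin d) :
    ω ^ (evenOddIndex d j * evenOddIndex d k) = ω ^ ((evenOddPerm hd j : ℕ) * evenOddPerm hd k) := by
  rw [pow_eq_pow_mod _ hω, pow_eq_pow_mod ((evenOddPerm hd j : ℕ) * _) hω,
    evenOddIndex_eq_evenOddPerm hd, evenOddIndex_eq_evenOddPerm hd]
  exact congrArg (ω ^ ·) (Nat.add_mul_mod_two_mul_modEq hd _ _)

theorem fourier_even_case_submatrix_full_rank (d : ℕ) (hd : 0 < d) (heven : Even d)
    (ω : ℂ) (hω : ω = Complex.exp (2 * Real.pi * Complex.I / (2 * d)))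
    (F : Matrix (Fin (2 * d)) (Fin (2 * d)) ℂ)
    (hF : ∀ j k, F j k = ω ^ (j.val * k.val) / (Real.sqrt (2 * d) : ℂ))
    (ℓ : Fin d → ℕ) (hℓ : ∀ j, ℓ j = if j.val < d / 2 then 0 else 1)
    (M : Matrix (Fin d) (Fin d) ℂ)
    (hM : ∀ j k, M j k =
      F ⟨2 * j.val + ℓ j, by have := j.isLt; rw [hℓ]; split <;> omega⟩
        ⟨2 * k.val + ℓ k, by have := k.isLt; rw [hℓ]; split <;> omega⟩) :
    M.rank = d := by
  have hprim : IsPrimitiveRoot ω (2 * d) := by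
    convert Complex.isPrimitiveRoot_exp (2 * d) (by omega) using 3
    rw [hω]
    push_cast
    ring
  have hscale : (Real.sqrt (2 * d) : ℂ)⁻¹ ≠ 0 := by
    have : (0 : ℝ) < 2 * d := by positivity
    exact inv_ne_zero (ofReal_ne_zero.mpr (Real.sqrt_pos.mpr this).ne')
  have hM_eq : M = (Real.sqrt (2 * d) : ℂ)⁻¹ • (vandermonde fun m : Fin d ↦ ω ^ (m : ℕ)).submatrix
      (evenOddPerm heven) (evenOddPerm heven) := by
    ext j k
    rw [hM, hF, Matrix.smul_apply, submatrix_apply, vandermonde_apply, ← pow_mul, smul_eq_mul,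
      ← pow_evenOddIndex_mul hprim.pow_eq_one heven, div_eq_inv_mul]
    simp only [hℓ, evenOddIndex]
  rw [hM_eq, rank_smul_of_mem_nonZeroDivisors _ (mem_nonZeroDivisors_of_ne_zero hscale),
    rank_submatrix, hprim.rank_vandermonde_pow (by omega)]
end

section
/- Let d be a positive integer, ω = exp(2πi/(2d)), and C_d the Fourier coin: C_d has (j,k)-entry ω^{jk}/√(2d). Then for every ℓ ∈ {0,1}^d with ℓ = (0,...,0) if d odd, or ℓ = (0,...,0,1,...,1) (d/2 zeros then d/2 ones) if d even, the submatrix C_d^{(ℓ)} with entries (C_d)_{2j+ℓ_j,2k+ℓ_k} is invertible. In particular, there exists ℓ ∈ {0,1}^d with rank(C_d^{(ℓ)}) = d. -/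
/-!
Put `a j = 2 j + ℓ j`, so that the submatrix is `(2d)^{-1/2}` times `(ω ^ (a j * a k))`.
For odd `d`, `a j = 2 j` and this is the Vandermonde matrix of the powers of the primitive
`d`-th root of unity `ω⁴`. For `d = 2m`, split a kernel vector into halves with generating
polynomials `P, Q` of degree `< m`; row `j` reads `P(z²) + z^(2m+1) Q(z²) = 0` for `z = ω ^ a j`.
As `z^(4m) = 1`, squaring shows that `P² - X Q²` vanishes at every `z²`, and these run through
all `2m`-th roots of unity. Its degree is `< 2m`, so `P² = X Q²`, whence `P = Q = 0`.
-/

open Complex Matrix Polynomial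

theorem Matrix.isUnit_of_forall_mulVec_eq_zero {n K : Type*} [Fintype n] [DecidableEq n] [Field K]
    {A : Matrix n n K} (h : ∀ v, A *ᵥ v = 0 → v = 0) : IsUnit A :=
  mulVec_injective_iff_isUnit.mp fun v w hvw =>
    sub_eq_zero.mp (h _ (by rw [mulVec_sub, hvw, sub_self]))

namespace Polynomial

section CommSemiring

variable {R : Type*} [CommSemiring R] [DecidableEq R]

theorem eval_ofFn {n : ℕ} (v : Fin n → R) (x : R) :
    (ofFn n v).eval x = ∑ i, v i * x ^ (i : ℕ) := by
  simp [ofFn_eq_sum_monomial, eval_finsetSum]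

theorem sum_mul_pow_eq_eval_add {m : ℕ} (a : Fin (m + m) → ℕ)
    (ha : ∀ j, a j = 2 * j + if (j : ℕ) < m then 0 else 1) (v : Fin (m + m) → R) (z : R) :
    ∑ k, v k * z ^ a k = (ofFn m fun k => v (Fin.castAdd m k)).eval (z ^ 2) +
      z ^ (2 * m + 1) * (ofFn m fun k => v (Fin.natAdd m k)).eval (z ^ 2) := by
  simp only [Fin.sum_univ_add, eval_ofFn, Finset.mul_sum, ha, Fin.val_castAdd, Fin.val_natAdd]
  congr 1 <;> refine Finset.sum_congr rfl fun k _ => ?_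
  · simp only [k.isLt, if_true, add_zero, pow_mul]
  · rw [if_neg (by omega), mul_left_comm, ← pow_mul, ← pow_add]
    ring_nf

end CommSemiring

variable {R : Type*} [CommRing R]

theorem eq_zero_of_sq_eq_X_mul_sq [IsDomain R] {P Q : R[X]} (h : P ^ 2 = X * Q ^ 2) :
    P = 0 ∧ Q = 0 := by
  by_cases hQ : Q = 0
  · simpa [hQ] using h
  -- otherwise the degrees `2 deg P` and `1 + 2 deg Q` would differ in parity
  have hdeg := congrArg natDegree h
  rw [natDegree_pow, natDegree_mul X_ne_zero (pow_ne_zero 2 hQ), natDegree_X,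
    natDegree_pow] at hdeg
  omega

theorem natDegree_sq_sub_X_mul_sq_lt {m : ℕ} {P Q : R[X]} (hP : P.natDegree < m)
    (hQ : Q.natDegree < m) : (P ^ 2 - X * Q ^ 2).natDegree < m + m := by
  have hX := natDegree_X_le (R := R)
  have hP2 := natDegree_pow_le (p := P) (n := 2)
  have hQ2 := natDegree_pow_le (p := Q) (n := 2)
  refine (natDegree_sub_le _ _).trans_lt (max_lt ?_ (natDegree_mul_le.trans_lt ?_)) <;> omega

theorem eval_sq_sub_X_mul_sq_eq_zero {m : ℕ} {P Q : R[X]} {z : R} (hz : z ^ (2 * (m + m)) = 1)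
    (h : P.eval (z ^ 2) + z ^ (2 * m + 1) * Q.eval (z ^ 2) = 0) :
    (P ^ 2 - X * Q ^ 2).eval (z ^ 2) = 0 := by
  simp only [eval_sub, eval_mul, eval_pow, eval_X]
  linear_combination (P.eval (z ^ 2) - z ^ (2 * m + 1) * Q.eval (z ^ 2)) * h +
    z ^ 2 * Q.eval (z ^ 2) ^ 2 * hz

end Polynomial

namespace IsPrimitiveRoot

variable {n : ℕ}

theorem injective_pow_fin {M : Type*} [CommMonoid M] {ω : M} (hω : IsPrimitiveRoot ω n) :
    Function.Injective fun t : Fin n => ω ^ (t : ℕ) :=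
  fun s t hst => Fin.ext (hω.pow_inj s.isLt t.isLt hst)

theorem eq_zero_of_forall_eval_pow_eq_zero {R : Type*} [CommRing R] [IsDomain R] {ω : R}
    (hω : IsPrimitiveRoot ω n) {p : R[X]} (hp : p.natDegree < n)
    (h : ∀ t < n, p.eval (ω ^ t) = 0) : p = 0 :=
  eq_zero_of_natDegree_lt_card_of_eval_eq_zero p hω.injective_pow_fin (fun t => h t t.isLt)
    (by rwa [Fintype.card_fin])

theorem exists_sq_pow_eq_pow {M : Type*} [CommMonoid M] {ω : M} {m : ℕ}
    (hω : IsPrimitiveRoot ω (2 * (m + m))) (a : Fin (m + m) → ℕ)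
    (ha : ∀ j, a j = 2 * j + if (j : ℕ) < m then 0 else 1) {t : ℕ} (ht : t < m + m) :
    ∃ j, (ω ^ a j) ^ 2 = (ω ^ 2) ^ t := by
  obtain ⟨i, rfl | rfl⟩ := Nat.even_or_odd' t
  · refine ⟨Fin.castAdd m ⟨i, by omega⟩, ?_⟩
    rw [ha, if_pos (by simp; omega)]
    simp only [Fin.val_castAdd, ← pow_mul]
    ring_nf
  · refine ⟨Fin.natAdd m ⟨i, by omega⟩, ?_⟩
    rw [ha, if_neg (by simp)]
    simp only [Fin.val_natAdd, ← pow_mul]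
    rw [show (2 * (m + i) + 1) * 2 = 2 * (m + m) + 2 * (2 * i + 1) by ring, pow_add,
      hω.pow_eq_one, one_mul]

variable {K : Type*} [Field K] {ω : K}

theorem isUnit_of_pow_mul (hω : IsPrimitiveRoot ω n) :
    IsUnit (of fun j k : Fin n => ω ^ ((j : ℕ) * k)) := by
  rw [isUnit_iff_isUnit_det, isUnit_iff_ne_zero]
  simpa only [vandermonde, pow_mul] using det_vandermonde_ne_zero_iff.mpr hω.injective_pow_fin

theorem isUnit_of_pow_mul_of_odd (hω : IsPrimitiveRoot ω (2 * n)) (hn : Odd n)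
    (a : Fin n → ℕ) (ha : ∀ j, a j = 2 * j) : IsUnit (of fun j k => ω ^ (a j * a k)) := by
  have hω4 : IsPrimitiveRoot ((ω ^ 2) ^ 2) n :=
    (hω.pow (by have := hn.pos; omega) rfl).pow_of_coprime 2 (Nat.coprime_two_left.mpr hn)
  have hsub : (of fun j k => ω ^ (a j * a k)) =
      of fun j k : Fin n => ((ω ^ 2) ^ 2) ^ ((j : ℕ) * k) := by
    ext j k
    simp only [of_apply, ha, ← pow_mul]
    ring_nf
  exact hsub ▸ hω4.isUnit_of_pow_mul

theorem isUnit_of_pow_mul_of_even {m : ℕ} (hω : IsPrimitiveRoot ω (2 * (m + m)))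
    (a : Fin (m + m) → ℕ) (ha : ∀ j, a j = 2 * j + if (j : ℕ) < m then 0 else 1) :
    IsUnit (of fun j k => ω ^ (a j * a k)) := by
  classical
  refine isUnit_of_forall_mulVec_eq_zero fun v hv => ?_
  obtain rfl | hm := m.eq_zero_or_pos
  · exact funext fun k => k.elim0
  set P := ofFn m fun k => v (Fin.castAdd m k)
  set Q := ofFn m fun k => v (Fin.natAdd m k)
  have hrow (j) :
      P.eval ((ω ^ a j) ^ 2) + (ω ^ a j) ^ (2 * m + 1) * Q.eval ((ω ^ a j) ^ 2) = 0 := by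
    rw [← sum_mul_pow_eq_eval_add a ha]
    refine (Finset.sum_congr rfl fun k _ => ?_).trans (congrFun hv j)
    simp only [of_apply, pow_mul, mul_comm]
  have hroot (j) : (ω ^ a j) ^ (2 * (m + m)) = 1 := by
    rw [← pow_mul, mul_comm, pow_mul, hω.pow_eq_one, one_pow]
  have hPQ : P ^ 2 - X * Q ^ 2 = 0 := by
    refine (hω.pow (by omega) rfl).eq_zero_of_forall_eval_pow_eq_zero
      (natDegree_sq_sub_X_mul_sq_lt (ofFn_natDegree_lt hm _) (ofFn_natDegree_lt hm _))
      fun t ht => ?_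
    obtain ⟨j, hj⟩ := hω.exists_sq_pow_eq_pow a ha ht
    exact hj ▸ eval_sq_sub_X_mul_sq_eq_zero (hroot j) (hrow j)
  obtain ⟨hP, hQ⟩ := eq_zero_of_sq_eq_X_mul_sq (sub_eq_zero.mp hPQ)
  ext k
  refine Fin.addCases (fun k => ?_) (fun k => ?_) k
  · exact congrFun ((injective_ofFn m).eq_iff.mp (hP.trans (ofFn_zero m).symm)) k
  · exact congrFun ((injective_ofFn m).eq_iff.mp (hQ.trans (ofFn_zero m).symm)) k

end IsPrimitiveRoot

theorem fourier_coin_exists_full_rank_submatrix (d : ℕ) (hd : 0 < d)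
    (ω : ℂ) (hω : ω = Complex.exp (2 * Real.pi * Complex.I / (2 * d)))
    (C : Matrix (Fin (2 * d)) (Fin (2 * d)) ℂ)
    (hC : ∀ j k, C j k = ω ^ (j.val * k.val) / (Real.sqrt (2 * d) : ℂ))
    (ℓ : Fin d → Fin 2)
    (hℓ : ∀ j, ℓ j = if Odd d then 0 else (if j.val < d / 2 then 0 else 1))
    (idx : Fin d → Fin (2 * d))
    (hidx : ∀ j, idx j = ⟨2 * j.val + (ℓ j).val, by have := j.isLt; have := (ℓ j).isLt; omega⟩) :
    IsUnit (Matrix.of fun j k : Fin d => C (idx j) (idx k)) ∧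
    ∃ ℓ' : Fin d → Fin 2,
      (Matrix.of fun j k : Fin d => C
        ⟨2 * j.val + (ℓ' j).val, by have := j.isLt; have := (ℓ' j).isLt; omega⟩
        ⟨2 * k.val + (ℓ' k).val, by have := k.isLt; have := (ℓ' k).isLt; omega⟩).rank = d := by
  have hprim : IsPrimitiveRoot ω (2 * d) := by
    rw [hω]
    convert Complex.isPrimitiveRoot_exp (2 * d) (by omega) using 3
    push_cast
    ring
  have hsqrt : (Real.sqrt (2 * d) : ℂ) ≠ 0 := by
    exact_mod_cast (Real.sqrt_pos.mpr (by positivity)).ne'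
  have hscale : (of fun j k => C (idx j) (idx k)) =
      (Real.sqrt (2 * d) : ℂ)⁻¹ • of fun j k => ω ^ ((idx j : ℕ) * idx k) := by
    ext j k
    simp [hC, div_eq_inv_mul]
  have hunit : IsUnit (of fun j k => ω ^ ((idx j : ℕ) * idx k)) := by
    rcases Nat.even_or_odd d with ⟨m, rfl⟩ | hodd
    · have hne : ¬Odd (m + m) := Nat.not_odd_iff_even.mpr ⟨m, rfl⟩
      have hhalf : (m + m) / 2 = m := by omega
      refine hprim.isUnit_of_pow_mul_of_even _ fun j => ?_
      simp only [hidx, hℓ, hne, hhalf, if_false]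
      split_ifs <;> rfl
    · exact hprim.isUnit_of_pow_mul_of_odd hodd _ fun j => by simp [hidx, hℓ, hodd]
  have key : IsUnit (of fun j k => C (idx j) (idx k)) := by
    rw [hscale, Algebra.smul_def]
    exact ((isUnit_iff_ne_zero.mpr (inv_ne_zero hsqrt)).map _).mul hunit
  refine ⟨key, ℓ, ?_⟩
  simp only [← hidx]
  rw [rank_of_isUnit _ key, Fintype.card_fin]
end

section
/- For the 2D Grover walk, define U(k₁,k₂) = D(k₁,k₂)·C where D = diag(e^{ik₁}, e^{-ik₁}, e^{ik₂}, e^{-ik₂}) and C is the 4×4 Grover coin. Then for all (k₁,k₂) ∈ [0,2π)², the vector v(k₁,k₂) = (1/(2√2))·(1+e^{-ik₂}, e^{-ik₁}+e^{-ik₁-ik₂}, 1+e^{-ik₁}, e^{-ik₂}+e^{-ik₁-ik₂})ᵀ satisfies U(k₁,k₂)·v(k₁,k₂) = v(k₁,k₂). -/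
open Complex Matrix

/-
With `a = e^{-ik₁}`, `b = e^{-ik₂}` the vector is proportional to `w = (1+b, a(1+b), 1+a, b(1+a))`,
whose entries sum to `2(1+a)(1+b)`. The Grover coin acts as `(C w)_j = (∑ w)/2 - w_j`, so
`C w = (a w₀, a⁻¹ w₁, b w₂, b⁻¹ w₃)`, and the shift `D = diag(a⁻¹, a, b⁻¹, b)` undoes exactly these factors.
-/

section GroverCoin

variable {K : Type*} [Field K] [NeZero (2 : K)] {n : ℕ}

theorem groverCoin_mulVec_apply {C : Matrix (Fin n) (Fin n) K}
    (hC : ∀ j k, C j k = if j = k then -(1 / 2) else 1 / 2) (w : Fin n → K) (j : Fin n) :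
    (C *ᵥ w) j = (∑ k, w k) / 2 - w j := by
  have hC' : ∀ k, C j k = 1 / 2 - if j = k then 1 else 0 := by
    intro k
    rw [hC]
    split_ifs
    · linear_combination -(add_halves (1 : K))
    · ring
  simp only [mulVec, dotProduct, hC', sub_mul, ite_mul, one_mul, zero_mul, Finset.sum_sub_distrib,
    Finset.sum_ite_eq, Finset.mem_univ, if_true, ← Finset.mul_sum]
  ring

theorem diagonal_mul_groverCoin_mulVec_eq_self {C : Matrix (Fin 4) (Fin 4) K}
    (hC : ∀ j k, C j k = if j = k then -(1 / 2) else 1 / 2) {a b : K} (ha : a ≠ 0) (hb : b ≠ 0) :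
    (diagonal ![a⁻¹, a, b⁻¹, b] * C) *ᵥ ![1 + b, a * (1 + b), 1 + a, b * (1 + a)] =
      ![1 + b, a * (1 + b), 1 + a, b * (1 + a)] := by
  ext j
  rw [← mulVec_mulVec, mulVec_diagonal, groverCoin_mulVec_apply hC, Fin.sum_univ_four]
  fin_cases j <;> simp only [Fin.zero_eta, Fin.mk_one, Fin.reduceFinMk, Fin.isValue, cons_val_zero,
    cons_val_one, cons_val] <;> field_simp <;> ring

end GroverCoin

theorem grover_walk_constant_eigenvector
    (C : Matrix (Fin 4) (Fin 4) ℂ)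
    (hC : ∀ j k, C j k = if j = k then -(1 / 2) else 1 / 2)
    (U : ℝ → ℝ → Matrix (Fin 4) (Fin 4) ℂ)
    (hU : ∀ k₁ k₂, U k₁ k₂ =
      Matrix.diagonal ![Complex.exp (Complex.I * k₁), Complex.exp (-(Complex.I * k₁)),
        Complex.exp (Complex.I * k₂), Complex.exp (-(Complex.I * k₂))] * C)
    (v : ℝ → ℝ → Fin 4 → ℂ)
    (hv : ∀ k₁ k₂, v k₁ k₂ = (1 / (2 * Real.sqrt 2) : ℝ) •
      ![1 + Complex.exp (-(Complex.I * k₂)),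
        Complex.exp (-(Complex.I * k₁)) + Complex.exp (-(Complex.I * k₁) - Complex.I * k₂),
        1 + Complex.exp (-(Complex.I * k₁)),
        Complex.exp (-(Complex.I * k₂)) + Complex.exp (-(Complex.I * k₁) - Complex.I * k₂)]) :
    ∀ k₁ k₂ : ℝ, k₁ ∈ Set.Ico 0 (2 * Real.pi) → k₂ ∈ Set.Ico 0 (2 * Real.pi) →
      (U k₁ k₂).mulVec (v k₁ k₂) = v k₁ k₂ := by
  intro k₁ k₂ _ _
  set a := Complex.exp (-(Complex.I * k₁))
  set b := Complex.exp (-(Complex.I * k₂))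
  have hab : Complex.exp (-(Complex.I * k₁) - Complex.I * k₂) = a * b := by
    rw [sub_eq_add_neg, Complex.exp_add]
  have hv' : v k₁ k₂ = (1 / (2 * Real.sqrt 2) : ℝ) • ![1 + b, a * (1 + b), 1 + a, b * (1 + a)] := by
    rw [hv, hab, mul_add, mul_one, mul_add, mul_one, mul_comm b a]
  have hU' : U k₁ k₂ = diagonal ![a⁻¹, a, b⁻¹, b] * C := by
    rw [hU]
    simp only [a, b, Complex.exp_neg, inv_inv]
  rw [hU', hv', mulVec_smul,
    diagonal_mul_groverCoin_mulVec_eq_self hC (Complex.exp_ne_zero _) (Complex.exp_ne_zero _)]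
end

section
/- Define U(k₁,k₂) = D(k₁,k₂)·F₂ where D = diag(e^{ik₁}, e^{-ik₁}, e^{ik₂}, e^{-ik₂}) and F₂ is the 4×4 Fourier matrix with entries i^{jk}/2. Then there is no constant λ ∈ ℂ that is an eigenvalue of U(k₁,k₂) for all (k₁,k₂) ∈ [0,2π)². -/
/-!
Writing a = e^{ik₁} and b = e^{ik₂}, the characteristic polynomial of U(k₁, k₂) is
λ⁴ - i - s λ (λ² - 1) + (i - 1) (a + b)² / (4ab) λ²  with  s = (a + b + i (a⁻¹ + b⁻¹)) / 2.
At (k₁, k₂) = (0, π) it is λ⁴ - i, and at (π/2, π) it is λ⁴ + (i - 1)/2 λ² - i, so a common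
root λ would satisfy both λ² = 0 and λ⁴ = i.
-/

open Complex Matrix

theorem Matrix.det_sub_smul_one_eq_zero_of_mulVec_eq_smul {n R : Type*} [Fintype n]
    [DecidableEq n] [CommRing R] [IsDomain R] {M : Matrix n n R} {lam : R} {v : n → R}
    (hv : v ≠ 0) (hMv : M *ᵥ v = lam • v) : (M - lam • 1).det = 0 :=
  exists_mulVec_eq_zero_iff.mp
    ⟨v, hv, by rw [sub_mulVec, hMv, smul_mulVec, one_mulVec, sub_self]⟩

noncomputable def dft4 : Matrix (Fin 4) (Fin 4) ℂ := of fun j k => I ^ (j.val * k.val) / 2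

noncomputable def walkMatrix (a b : ℂ) : Matrix (Fin 4) (Fin 4) ℂ :=
  diagonal ![a, a⁻¹, b, b⁻¹] * dft4

theorem walkMatrix_sub_smul_one (a b lam : ℂ) : walkMatrix a b - lam • 1 =
    !![a / 2 - lam, a / 2, a / 2, a / 2;
       a⁻¹ / 2, a⁻¹ * I / 2 - lam, -a⁻¹ / 2, -a⁻¹ * I / 2;
       b / 2, -b / 2, b / 2 - lam, -b / 2;
       b⁻¹ / 2, -b⁻¹ * I / 2, -b⁻¹ / 2, b⁻¹ * I / 2 - lam] := by
  ext j k
  fin_cases j <;> fin_cases k <;>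
    simp [walkMatrix, dft4, mul_apply, Fin.sum_univ_four, one_apply, pow_succ] <;> ring

theorem det_walkMatrix_sub_smul_one {a b : ℂ} (ha : a ≠ 0) (hb : b ≠ 0) (lam : ℂ) :
    (walkMatrix a b - lam • 1).det =
      lam ^ 4 - I - (a + b + I * (a⁻¹ + b⁻¹)) / 2 * lam * (lam ^ 2 - 1)
        + (I - 1) * (a + b) ^ 2 / (4 * a * b) * lam ^ 2 := by
  rw [walkMatrix_sub_smul_one, det_succ_row_zero]
  simp only [Nat.succ_eq_add_one, Nat.reduceAdd, neg_mul, Fin.isValue, of_apply, cons_val',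
    cons_val_fin_one, cons_val_zero, det_fin_three, submatrix_apply, Fin.succ_zero_eq_one,
    Fin.succAbove, Fin.castSucc_zero, cons_val_one, Fin.succ_one_eq_two, Fin.castSucc_one,
    cons_val, Fin.reduceSucc, Fin.reduceCastSucc, Fin.sum_univ_succ, Fin.coe_ofNat_eq_mod,
    Nat.zero_mod, pow_zero, one_mul, lt_self_iff_false, ↓reduceIte, not_lt_zero, Fin.val_succ,
    cons_val_succ, Fin.succ_pos, zero_add, pow_one, Fin.lt_one_iff, Fin.reduceEq, even_two,
    Even.neg_pow, one_pow, Fin.reduceLT, Finset.univ_unique, Fin.default_eq_zero,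
    Fin.val_eq_zero, Finset.sum_singleton]
  field_simp
  ring

theorem det_walkMatrix_one_neg_one_sub_smul_one (lam : ℂ) :
    (walkMatrix 1 (-1) - lam • 1).det = lam ^ 4 - I := by
  rw [det_walkMatrix_sub_smul_one one_ne_zero (neg_ne_zero.mpr one_ne_zero)]
  ring

theorem det_walkMatrix_I_neg_one_sub_smul_one (lam : ℂ) :
    (walkMatrix I (-1) - lam • 1).det = lam ^ 4 + (I - 1) / 2 * lam ^ 2 - I := by
  rw [det_walkMatrix_sub_smul_one I_ne_zero (neg_ne_zero.mpr one_ne_zero), inv_I, inv_neg,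
    inv_one]
  field_simp
  linear_combination (4 * I * lam * (lam ^ 2 - 1) - 2 * lam ^ 2 * (I - 1)) * I_sq

theorem fourier_walk_2d_no_constant_eigenvalue
    (F : Matrix (Fin 4) (Fin 4) ℂ)
    (hF : ∀ j k, F j k = Complex.I ^ (j.val * k.val) / 2)
    (U : ℝ → ℝ → Matrix (Fin 4) (Fin 4) ℂ)
    (hU : ∀ k₁ k₂, U k₁ k₂ =
      Matrix.diagonal ![Complex.exp (Complex.I * k₁), Complex.exp (-(Complex.I * k₁)),
        Complex.exp (Complex.I * k₂), Complex.exp (-(Complex.I * k₂))] * F) :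
    ¬ ∃ lam : ℂ, ∀ k₁ k₂ : ℝ, k₁ ∈ Set.Ico 0 (2 * Real.pi) → k₂ ∈ Set.Ico 0 (2 * Real.pi) →
      ∃ v : Fin 4 → ℂ, v ≠ 0 ∧ (U k₁ k₂).mulVec v = lam • v := by
  rintro ⟨lam, h⟩
  have hU' (k₁ k₂ : ℝ) : U k₁ k₂ = walkMatrix (exp (I * k₁)) (exp (I * k₂)) := by
    rw [hU, walkMatrix, exp_neg, exp_neg, show F = dft4 from ext fun j k => hF j k]
  have hdet (k₁ k₂ : ℝ) (h₁ : k₁ ∈ Set.Ico 0 (2 * Real.pi)) (h₂ : k₂ ∈ Set.Ico 0 (2 * Real.pi)) :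
      (walkMatrix (exp (I * k₁)) (exp (I * k₂)) - lam • 1).det = 0 := by
    obtain ⟨v, hv, hUv⟩ := h k₁ k₂ h₁ h₂
    exact det_sub_smul_one_eq_zero_of_mulVec_eq_smul hv (hU' k₁ k₂ ▸ hUv)
  have hπ := Real.pi_pos
  have h₁ := hdet 0 Real.pi ⟨le_rfl, by positivity⟩ ⟨hπ.le, by linarith⟩
  have h₂ := hdet (Real.pi / 2) Real.pi ⟨by positivity, by linarith⟩ ⟨hπ.le, by linarith⟩
  rw [ofReal_zero, mul_zero, exp_zero, mul_comm, exp_pi_mul_I,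
    det_walkMatrix_one_neg_one_sub_smul_one] at h₁
  rw [mul_comm, ofReal_div, ofReal_ofNat, exp_pi_div_two_mul_I, mul_comm, exp_pi_mul_I,
    det_walkMatrix_I_neg_one_sub_smul_one] at h₂
  have hlam : lam ^ 2 = 0 := by linear_combination (-1 - I) * (h₂ - h₁) + lam ^ 2 / 2 * I_sq
  exact I_ne_zero (by linear_combination -h₁ + lam ^ 2 * hlam)
end

section
/- Let H = (1/√2)·[[1,1],[1,-1]] be the Hadamard matrix and define U(k) = diag(e^{ik}, e^{-ik})·H for k ∈ [0,2π). Then there is no λ ∈ ℂ that is an eigenvalue of U(k) for every k ∈ [0,2π). -/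
/-!
The eigenvalues `μ` of a `2 × 2` matrix `M` are the roots of `μ ^ 2 - tr M * μ + det M`.
For the Hadamard walk `det U(k) = -1` for every `k`, while `tr U(k) = √2 i sin k` varies.
A common eigenvalue of `U(0)` and `U(π/2)` would therefore satisfy `μ ^ 2 = 1` and
`μ ^ 2 - √2 i μ - 1 = 0`, forcing `μ = 0`, which contradicts `μ ^ 2 = 1`.
-/

open Complex Matrix

theorem Matrix.sq_sub_trace_mul_add_det_eq_zero_of_mulVec_eq_smul {R : Type*} [CommRing R]
    [IsDomain R] {M : Matrix (Fin 2) (Fin 2) R} {μ : R} {v : Fin 2 → R} (hv : v ≠ 0)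
    (h : M *ᵥ v = μ • v) : μ ^ 2 - M.trace * μ + M.det = 0 := by
  have hdet : (M - μ • 1).det = 0 :=
    exists_mulVec_eq_zero_iff.mp ⟨v, hv, by rw [sub_mulVec, h, smul_mulVec, one_mulVec, sub_self]⟩
  rw [det_fin_two] at hdet
  rw [trace_fin_two, det_fin_two]
  simp only [sub_apply, smul_apply, one_apply_eq, one_apply_ne zero_ne_one,
    one_apply_ne one_ne_zero, smul_eq_mul, mul_one, mul_zero, sub_zero] at hdet
  linear_combination hdet

noncomputable def hadamardCoin : Matrix (Fin 2) (Fin 2) ℂ :=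
  (1 / Real.sqrt 2 : ℝ) • !![1, 1; 1, -1]

noncomputable def hadamardWalk (k : ℝ) : Matrix (Fin 2) (Fin 2) ℂ :=
  diagonal ![exp (I * k), exp (-(I * k))] * hadamardCoin

theorem ofReal_sqrt_two_sq : ((Real.sqrt 2 : ℝ) : ℂ) ^ 2 = 2 := by
  rw [← ofReal_pow, Real.sq_sqrt zero_le_two, ofReal_ofNat]

theorem det_hadamardCoin : hadamardCoin.det = -1 := by
  simp [hadamardCoin, det_fin_two_of]
  field_simp
  linear_combination ofReal_sqrt_two_sq

theorem det_hadamardWalk (k : ℝ) : (hadamardWalk k).det = -1 := by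
  rw [hadamardWalk, det_mul, det_diagonal, Fin.prod_univ_two, det_hadamardCoin]
  simp [← exp_add]

theorem trace_hadamardWalk (k : ℝ) :
    (hadamardWalk k).trace = Real.sqrt 2 * I * sin k := by
  have hexp : exp (I * k) - exp (-(I * k)) = 2 * I * sin k := by
    rw [mul_comm I, ← neg_mul, exp_mul_I, exp_mul_I, cos_neg, sin_neg]
    ring
  have hsqrt : ((Real.sqrt 2 : ℝ) : ℂ) ≠ 0 := by simp
  rw [trace_fin_two]
  simp [hadamardWalk, hadamardCoin, diagonal_mul]
  field_simp
  linear_combination hexp - I * sin k * ofReal_sqrt_two_sq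

theorem sq_sub_mul_sub_one_eq_zero_of_hadamardWalk_mulVec_eq_smul {k : ℝ} {μ : ℂ}
    {v : Fin 2 → ℂ} (hv : v ≠ 0) (h : hadamardWalk k *ᵥ v = μ • v) :
    μ ^ 2 - Real.sqrt 2 * I * sin k * μ - 1 = 0 := by
  have := sq_sub_trace_mul_add_det_eq_zero_of_mulVec_eq_smul hv h
  rwa [trace_hadamardWalk, det_hadamardWalk, ← sub_eq_add_neg] at this

theorem hadamard_walk_no_constant_eigenvalue
    (H : Matrix (Fin 2) (Fin 2) ℂ)
    (hH : H = (1 / (Real.sqrt 2) : ℝ) • !![1, 1; 1, -1])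
    (U : ℝ → Matrix (Fin 2) (Fin 2) ℂ)
    (hU : ∀ k, U k =
      Matrix.diagonal ![Complex.exp (Complex.I * k), Complex.exp (-(Complex.I * k))] * H) :
    ¬ ∃ lam : ℂ, ∀ k : ℝ, k ∈ Set.Ico 0 (2 * Real.pi) →
      ∃ v : Fin 2 → ℂ, v ≠ 0 ∧ (U k).mulVec v = lam • v := by
  obtain rfl : H = hadamardCoin := hH
  obtain rfl : U = hadamardWalk := funext hU
  rintro ⟨μ, hμ⟩
  have hπ := Real.pi_pos
  obtain ⟨v₀, hv₀, h₀⟩ := hμ 0 ⟨le_rfl, by positivity⟩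
  obtain ⟨v₁, hv₁, h₁⟩ := hμ (Real.pi / 2) ⟨by positivity, by linarith⟩
  have e₀ := sq_sub_mul_sub_one_eq_zero_of_hadamardWalk_mulVec_eq_smul hv₀ h₀
  have e₁ := sq_sub_mul_sub_one_eq_zero_of_hadamardWalk_mulVec_eq_smul hv₁ h₁
  push_cast at e₀ e₁
  rw [sin_zero] at e₀
  rw [sin_pi_div_two] at e₁
  have hμ0 : μ = 0 := by
    have : (Real.sqrt 2 * I : ℂ) * μ = 0 := by linear_combination e₀ - e₁
    simpa using this
  simp [hμ0] at e₀
end
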